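/- For every y₀ ∈ (0, F₁(1)), the integral equation y_t = y₀ + ∫₀^t (G ∘ F₁⁻¹)(y_s) ds + γθ^β w_t, t ∈ ℝ₊, admits a unique continuous solution y : ℝ₊ → (0, F₁(1)); in particular the solution never reaches 0 or F₁(1) in finite time. -/

import Mathlib

/-!
Write `b = G ∘ F₁⁻¹` and `M = F₁(1)`. Since `F₁(x) ≥ x^(1-β)/(1-β)` and `F₁` is symmetric about
`1/2`, the drift repels from the boundary: `b(z) ≥ c z^(-ρ)` and `b(M - z) ≤ -c z^(-ρ)` for small
`z`, with `ρ = β/(1-β)`. On `[0, T]` the forcing is `α`-Hölder with some constant `K`. If a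
solution went down from `2δ` to `δ`, on the crossing interval of length `τ` the drift would push it
up by at least `A τ` with `A ≈ δ^(-ρ)`, while the noise moves it by at most `K τ^α`; since
`ρ > (1-α)/α`, `K τ^α < δ + A τ` for all `τ` once `δ` is small, a contradiction. So every solution
stays in `[δ, M - δ]`, where `b` is Lipschitz. Truncating `b` there, `z = y - γθ^β w` solves
`z' = b(z + γθ^β w_t)`, and Picard–Lindelöf gives existence and uniqueness on `[0, T]`; letting
`T → ∞` glues these solutions.
-/

noncomputable def F1 (β y : ℝ) : ℝ := ∫ v in (0:ℝ)..y, (v * (1 - v)) ^ (-β)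

noncomputable def F1inv (β z : ℝ) : ℝ := Function.invFunOn (F1 β) (Set.Icc 0 1) z

noncomputable def G (β θ μ x : ℝ) : ℝ := θ * (μ - x) * (x * (1 - x)) ^ (-β)

open MeasureTheory intervalIntegral Set Filter Topology

section F1

variable {β : ℝ}

lemma rpow_neg_le_rpow_neg_mul_one_sub (hβ : 0 ≤ β) {v : ℝ} (hv : v ∈ Ioo (0:ℝ) 1) :
    v ^ (-β) ≤ (v * (1 - v)) ^ (-β) :=
  Real.rpow_le_rpow_of_nonpos (by nlinarith [hv.1, hv.2]) (by nlinarith [hv.1, hv.2])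
    (by linarith)

lemma one_le_rpow_neg_mul_one_sub (hβ : 0 ≤ β) {v : ℝ} (hv : v ∈ Ioo (0:ℝ) 1) :
    1 ≤ (v * (1 - v)) ^ (-β) :=
  (Real.one_le_rpow_of_pos_of_le_one_of_nonpos hv.1 hv.2.le (by linarith)).trans
    (rpow_neg_le_rpow_neg_mul_one_sub hβ hv)

lemma intervalIntegrable_F1_integrand (hβ : β ∈ Ico 0 1) :
    IntervalIntegrable (fun v : ℝ => (v * (1 - v)) ^ (-β)) volume 0 1 := by
  have hr : -1 < -β := by linarith [hβ.2]
  -- split at `1 / 2`: each factor is integrable at its singular endpoint, continuous at the other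
  have left : IntervalIntegrable (fun v : ℝ => v ^ (-β) * (1 - v) ^ (-β)) volume 0 (1 / 2) :=
    (intervalIntegrable_rpow' hr).mul_continuousOn <| ContinuousOn.rpow_const (by fun_prop)
      fun v hv => Or.inl (by rw [uIcc_of_le (by norm_num)] at hv; linarith [hv.2])
  have right : IntervalIntegrable (fun v : ℝ => v ^ (-β) * (1 - v) ^ (-β)) volume (1 / 2) 1 := by
    refine IntervalIntegrable.continuousOn_mul ?_ <| ContinuousOn.rpow_const (by fun_prop)
      fun v hv => Or.inl (by rw [uIcc_of_le (by norm_num)] at hv; linarith [hv.1])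
    convert ((intervalIntegrable_rpow' hr (a := 0) (b := 1 / 2)).comp_sub_left 1).symm using 1 <;>
      norm_num
  refine (left.trans right).congr fun v hv => ?_
  rw [uIoc_of_le zero_le_one] at hv
  exact (Real.mul_rpow hv.1.le (by linarith [hv.2])).symm

lemma intervalIntegrable_F1_integrand_of_mem (hβ : β ∈ Ico 0 1) {x y : ℝ}
    (hx : x ∈ Icc (0:ℝ) 1) (hy : y ∈ Icc (0:ℝ) 1) :
    IntervalIntegrable (fun v : ℝ => (v * (1 - v)) ^ (-β)) volume x y :=
  (intervalIntegrable_F1_integrand hβ).mono_set <| by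
    rw [uIcc_of_le zero_le_one]
    exact uIcc_subset_Icc hx hy

lemma F1_sub_F1 (hβ : β ∈ Ico 0 1) {x y : ℝ} (hx : x ∈ Icc (0:ℝ) 1) (hy : y ∈ Icc (0:ℝ) 1) :
    F1 β y - F1 β x = ∫ v in x..y, (v * (1 - v)) ^ (-β) :=
  integral_interval_sub_left (intervalIntegrable_F1_integrand_of_mem hβ (by simp) hy)
    (intervalIntegrable_F1_integrand_of_mem hβ (by simp) hx)

lemma sub_le_F1_sub_F1 (hβ : β ∈ Ico 0 1) {x y : ℝ} (hx : x ∈ Icc (0:ℝ) 1)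
    (hy : y ∈ Icc (0:ℝ) 1) (hxy : x ≤ y) : y - x ≤ F1 β y - F1 β x := by
  rw [F1_sub_F1 hβ hx hy]
  calc y - x = ∫ _ in x..y, (1:ℝ) := by simp
    _ ≤ _ := integral_mono_on_of_le_Ioo hxy intervalIntegrable_const
      (intervalIntegrable_F1_integrand_of_mem hβ hx hy) fun v hv =>
        one_le_rpow_neg_mul_one_sub hβ.1 ⟨hx.1.trans_lt hv.1, hv.2.trans_le hy.2⟩

lemma F1_strictMonoOn (hβ : β ∈ Ico 0 1) : StrictMonoOn (F1 β) (Icc 0 1) :=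
  fun _ hx _ hy hxy => by linarith [sub_le_F1_sub_F1 hβ hx hy hxy.le]

lemma dist_le_dist_F1 (hβ : β ∈ Ico 0 1) {x y : ℝ} (hx : x ∈ Icc (0:ℝ) 1)
    (hy : y ∈ Icc (0:ℝ) 1) : dist x y ≤ dist (F1 β x) (F1 β y) := by
  rw [Real.dist_eq, Real.dist_eq]
  rcases le_total x y with hxy | hxy
  · rw [abs_sub_comm, abs_sub_comm (F1 β x), abs_of_nonneg (by linarith),
      abs_of_nonneg (by linarith [sub_le_F1_sub_F1 hβ hx hy hxy])]
    exact sub_le_F1_sub_F1 hβ hx hy hxy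
  · rw [abs_of_nonneg (by linarith), abs_of_nonneg (by linarith [sub_le_F1_sub_F1 hβ hy hx hxy])]
    exact sub_le_F1_sub_F1 hβ hy hx hxy

@[simp]
lemma F1_zero : F1 β 0 = 0 := integral_same

lemma F1_one_pos (hβ : β ∈ Ico 0 1) : 0 < F1 β 1 := by
  simpa using (F1_strictMonoOn hβ) (left_mem_Icc.2 zero_le_one) (right_mem_Icc.2 zero_le_one)
    zero_lt_one

lemma continuousOn_F1 (hβ : β ∈ Ico 0 1) : ContinuousOn (F1 β) (Icc 0 1) := by
  have h := continuousOn_primitive_interval (a := 0) (b := 1) (μ := volume)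
    (f := fun v : ℝ => (v * (1 - v)) ^ (-β))
  rw [uIcc_of_le zero_le_one] at h
  exact h ((intervalIntegrable_iff_integrableOn_Icc_of_le zero_le_one).1
    (intervalIntegrable_F1_integrand hβ))

lemma F1_one_sub (hβ : β ∈ Ico 0 1) {x : ℝ} (hx : x ∈ Icc (0:ℝ) 1) :
    F1 β (1 - x) = F1 β 1 - F1 β x := by
  rw [F1_sub_F1 hβ hx (right_mem_Icc.2 zero_le_one), F1]
  have := integral_comp_sub_left (a := x) (b := 1) (fun v : ℝ => (v * (1 - v)) ^ (-β)) 1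
  simp only [sub_self, sub_sub_cancel] at this
  rw [← this]
  congr 1
  ext v
  ring_nf

lemma rpow_one_sub_le_F1 (hβ : β ∈ Ico 0 1) {x : ℝ} (hx : x ∈ Icc (0:ℝ) 1) :
    x ^ (1 - β) ≤ (1 - β) * F1 β x := by
  have h1β : 0 < 1 - β := by linarith [hβ.2]
  have hint : ∫ v in (0:ℝ)..x, v ^ (-β) = x ^ (1 - β) / (1 - β) := by
    rw [integral_rpow (Or.inl (by linarith)), Real.zero_rpow (by linarith)]
    ring_nf
  have hle : ∫ v in (0:ℝ)..x, v ^ (-β) ≤ F1 β x :=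
    integral_mono_on_of_le_Ioo hx.1 (intervalIntegrable_rpow' (by linarith))
      (intervalIntegrable_F1_integrand_of_mem hβ (left_mem_Icc.2 zero_le_one) hx)
      fun v hv => rpow_neg_le_rpow_neg_mul_one_sub hβ.1 ⟨hv.1, hv.2.trans_le hx.2⟩
  rw [hint, div_le_iff₀ h1β] at hle
  linarith

lemma F1_surjOn (hβ : β ∈ Ico 0 1) : SurjOn (F1 β) (Icc 0 1) (Icc 0 (F1 β 1)) :=
  fun _ hz => intermediate_value_Icc zero_le_one (continuousOn_F1 hβ) (by simpa using hz)

lemma F1_F1inv (hβ : β ∈ Ico 0 1) {z : ℝ} (hz : z ∈ Icc 0 (F1 β 1)) : F1 β (F1inv β z) = z :=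
  Function.invFunOn_eq (F1_surjOn hβ hz)

lemma F1inv_F1 (hβ : β ∈ Ico 0 1) {x : ℝ} (hx : x ∈ Icc (0:ℝ) 1) : F1inv β (F1 β x) = x :=
  (F1_strictMonoOn hβ).injOn.leftInvOn_invFunOn hx

lemma F1inv_mem_Icc (hβ : β ∈ Ico 0 1) {z : ℝ} (hz : z ∈ Icc 0 (F1 β 1)) :
    F1inv β z ∈ Icc (0:ℝ) 1 :=
  Function.invFunOn_mem (F1_surjOn hβ hz)

lemma F1inv_mem_Ioo (hβ : β ∈ Ico 0 1) {z : ℝ} (hz : z ∈ Ioo 0 (F1 β 1)) :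
    F1inv β z ∈ Ioo (0:ℝ) 1 := by
  have hmem := F1inv_mem_Icc hβ (Ioo_subset_Icc_self hz)
  have hF := F1_F1inv hβ (Ioo_subset_Icc_self hz)
  refine ⟨hmem.1.lt_of_ne ?_, hmem.2.lt_of_ne ?_⟩ <;> rintro h
  · rw [← h, F1_zero] at hF; exact hz.1.ne hF
  · rw [h] at hF; exact hz.2.ne' hF

lemma lipschitzOnWith_F1inv (hβ : β ∈ Ico 0 1) :
    LipschitzOnWith 1 (F1inv β) (Icc 0 (F1 β 1)) :=
  LipschitzOnWith.of_dist_le_mul fun z hz z' hz' => by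
    simpa [F1_F1inv hβ hz, F1_F1inv hβ hz'] using
      dist_le_dist_F1 hβ (F1inv_mem_Icc hβ hz) (F1inv_mem_Icc hβ hz')

lemma F1inv_F1_one_sub (hβ : β ∈ Ico 0 1) {z : ℝ} (hz : z ∈ Icc 0 (F1 β 1)) :
    F1inv β (F1 β 1 - z) = 1 - F1inv β z := by
  have hx := F1inv_mem_Icc hβ hz
  calc F1inv β (F1 β 1 - z) = F1inv β (F1 β (1 - F1inv β z)) := by
        rw [F1_one_sub hβ hx, F1_F1inv hβ hz]
    _ = 1 - F1inv β z := F1inv_F1 hβ ⟨by linarith [hx.2], by linarith [hx.1]⟩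

end F1

noncomputable def drift (β θ μ z : ℝ) : ℝ := G β θ μ (F1inv β z)

def RepelsFromBoundary (b : ℝ → ℝ) (M ρ : ℝ) : Prop :=
  ∃ c > 0, ∃ ε > 0, ∀ z ∈ Ioc 0 ε, c * z ^ (-ρ) ≤ b z ∧ b (M - z) ≤ -(c * z ^ (-ρ))

section Drift

variable {β θ μ : ℝ}

lemma G_one_sub (x : ℝ) : G β θ μ (1 - x) = -G β θ (1 - μ) x := by
  simp only [G]
  rw [show (1 - x) * (1 - (1 - x)) = x * (1 - x) by ring]
  ring

lemma drift_F1_one_sub (hβ : β ∈ Ico 0 1) {z : ℝ} (hz : z ∈ Icc 0 (F1 β 1)) :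
    drift β θ μ (F1 β 1 - z) = -drift β θ (1 - μ) z := by
  rw [drift, F1inv_F1_one_sub hβ hz, G_one_sub, drift]

lemma exists_mul_rpow_le_drift (hβ : β ∈ Ico 0 1) (hθ : 0 < θ) (hμ : μ ∈ Ioo (0:ℝ) 1) :
    ∃ c > 0, ∃ ε > 0, ∀ z ∈ Ioc 0 ε, c * z ^ (-(β / (1 - β))) ≤ drift β θ μ z := by
  have h1β : 0 < 1 - β := by linarith [hβ.2]
  have hρ : 0 ≤ β / (1 - β) := div_nonneg hβ.1 h1β.le
  have hμ2 : μ / 2 ∈ Icc (0:ℝ) 1 := ⟨by linarith [hμ.1], by linarith [hμ.2]⟩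
  refine ⟨θ * μ / 2 * (1 - β) ^ (-(β / (1 - β))), by have := hμ.1; positivity, F1 β (μ / 2),
    by simpa using (F1_strictMonoOn hβ) (left_mem_Icc.2 zero_le_one) hμ2 (by linarith [hμ.1]),
    fun z hz => ?_⟩
  have hzM : z ∈ Ioo 0 (F1 β 1) := ⟨hz.1, hz.2.trans_lt <|
    (F1_strictMonoOn hβ) hμ2 (right_mem_Icc.2 zero_le_one) (by linarith [hμ.2])⟩
  set x := F1inv β z
  have hx : x ∈ Ioo (0:ℝ) 1 := F1inv_mem_Ioo hβ hzM
  have hFx : F1 β x = z := F1_F1inv hβ (Ioo_subset_Icc_self hzM)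
  have hxμ : x ≤ μ / 2 :=
    ((F1_strictMonoOn hβ).le_iff_le (Ioo_subset_Icc_self hx) hμ2).1 (hFx ▸ hz.2)
  have hpow : ((1 - β) * z) ^ (-(β / (1 - β))) ≤ x ^ (-β) :=
    calc ((1 - β) * z) ^ (-(β / (1 - β))) ≤ (x ^ (1 - β)) ^ (-(β / (1 - β))) :=
          Real.rpow_le_rpow_of_nonpos (Real.rpow_pos_of_pos hx.1 _)
            (hFx ▸ rpow_one_sub_le_F1 hβ (Ioo_subset_Icc_self hx)) (by linarith)
      _ = x ^ (-β) := by
          rw [← Real.rpow_mul hx.1.le]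
          congr 1
          field_simp
  calc θ * μ / 2 * (1 - β) ^ (-(β / (1 - β))) * z ^ (-(β / (1 - β)))
      = θ * μ / 2 * ((1 - β) * z) ^ (-(β / (1 - β))) := by
        rw [Real.mul_rpow h1β.le hz.1.le]; ring
    _ ≤ θ * (μ - x) * (x * (1 - x)) ^ (-β) :=
        mul_le_mul (by nlinarith) (hpow.trans (rpow_neg_le_rpow_neg_mul_one_sub hβ.1 hx))
          (Real.rpow_nonneg (mul_nonneg h1β.le hz.1.le) _) (mul_nonneg hθ.le (by linarith [hμ.1]))

lemma repelsFromBoundary_drift (hβ : β ∈ Ico 0 1) (hθ : 0 < θ) (hμ : μ ∈ Ioo (0:ℝ) 1) :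
    RepelsFromBoundary (drift β θ μ) (F1 β 1) (β / (1 - β)) := by
  obtain ⟨c₁, hc₁, ε₁, hε₁, h₁⟩ := exists_mul_rpow_le_drift hβ hθ hμ
  obtain ⟨c₂, hc₂, ε₂, hε₂, h₂⟩ :=
    exists_mul_rpow_le_drift hβ hθ (μ := 1 - μ) ⟨by linarith [hμ.2], by linarith [hμ.1]⟩
  refine ⟨min c₁ c₂, lt_min hc₁ hc₂, min (min ε₁ ε₂) (F1 β 1),
    lt_min (lt_min hε₁ hε₂) (F1_one_pos hβ), fun z hz => ⟨?_, ?_⟩⟩ <;>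
    have hzρ : 0 ≤ z ^ (-(β / (1 - β))) := Real.rpow_nonneg hz.1.le _
  · exact (mul_le_mul_of_nonneg_right (min_le_left _ _) hzρ).trans
      (h₁ z ⟨hz.1, hz.2.trans ((min_le_left _ _).trans (min_le_left _ _))⟩)
  · rw [drift_F1_one_sub hβ ⟨hz.1.le, hz.2.trans (min_le_right _ _)⟩, neg_le_neg_iff]
    exact (mul_le_mul_of_nonneg_right (min_le_right _ _) hzρ).trans
      (h₂ z ⟨hz.1, hz.2.trans ((min_le_left _ _).trans (min_le_right _ _))⟩)

lemma contDiffOn_G : ContDiffOn ℝ 1 (G β θ μ) (Ioo 0 1) := by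
  show ContDiffOn ℝ 1 (fun x => θ * (μ - x) * (x * (1 - x)) ^ (-β)) _
  exact ContDiffOn.mul (by fun_prop) <| ContDiffOn.rpow_const_of_ne (by fun_prop) fun x hx =>
    (mul_pos hx.1 (by linarith [hx.2])).ne'

lemma locallyLipschitzOn_drift (hβ : β ∈ Ico 0 1) :
    LocallyLipschitzOn (Ioo 0 (F1 β 1)) (drift β θ μ) := by
  have hG : LocallyLipschitzOn (Ioo 0 1) (G β θ μ) :=
    contDiffOn_G.locallyLipschitzOn (convex_Ioo 0 1)
  have hF : LipschitzOnWith 1 (F1inv β) (Ioo 0 (F1 β 1)) :=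
    (lipschitzOnWith_F1inv hβ).mono Ioo_subset_Icc_self
  intro z hz
  obtain ⟨K, t, ht, hKt⟩ := hG (F1inv_mem_Ioo hβ hz)
  have hpre : F1inv β ⁻¹' t ∈ 𝓝[Ioo 0 (F1 β 1)] z :=
    (hF.continuousOn z hz).tendsto_nhdsWithin (fun _ hw => F1inv_mem_Ioo hβ hw) ht
  exact ⟨K * 1, _, inter_mem self_mem_nhdsWithin hpre,
    hKt.comp (hF.mono inter_subset_left) fun _ hw => hw.2⟩

end Drift

lemma integral_congr_of_mem_Icc {f f' : ℝ → ℝ} {T t : ℝ} (h : EqOn f f' (Icc 0 T))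
    (ht : t ∈ Icc 0 T) : ∫ s in (0:ℝ)..t, f s = ∫ s in (0:ℝ)..t, f' s :=
  integral_congr (h.mono (uIcc_subset_Icc (left_mem_Icc.2 (ht.1.trans ht.2)) ht))

def IsSolutionOn (b g : ℝ → ℝ) (y₀ : ℝ) (U S : Set ℝ) (y : ℝ → ℝ) : Prop :=
  ContinuousOn y S ∧ (∀ t ∈ S, y t ∈ U) ∧
    ∀ t ∈ S, y t = y₀ + (∫ s in (0:ℝ)..t, b (y s)) + g t

namespace IsSolutionOn

variable {b g y y' : ℝ → ℝ} {y₀ T : ℝ} {U S : Set ℝ}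

lemma mono {S' : Set ℝ} (hy : IsSolutionOn b g y₀ U S y) (hS : S' ⊆ S) :
    IsSolutionOn b g y₀ U S' y :=
  ⟨hy.1.mono hS, fun t ht => hy.2.1 t (hS ht), fun t ht => hy.2.2 t (hS ht)⟩

lemma apply_zero (hy : IsSolutionOn b g y₀ U S y) (h0 : 0 ∈ S) : y 0 = y₀ + g 0 := by
  simpa using hy.2.2 0 h0

lemma congr (hy : IsSolutionOn b g y₀ U (Icc 0 T) y) (h : EqOn y y' (Icc 0 T)) :
    IsSolutionOn b g y₀ U (Icc 0 T) y' :=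
  ⟨hy.1.congr fun t ht => (h ht).symm, fun t ht => h ht ▸ hy.2.1 t ht, fun t ht => by
    rw [← h ht, hy.2.2 t ht]
    congr 2
    exact integral_congr_of_mem_Icc (fun s hs => by simp only [h hs]) ht⟩

lemma congr_drift (hy : IsSolutionOn b g y₀ U (Icc 0 T) y) {b' : ℝ → ℝ} {V W : Set ℝ}
    (hV : ∀ t ∈ Icc 0 T, y t ∈ V) (hb : EqOn b b' V) (hVW : V ⊆ W) :
    IsSolutionOn b' g y₀ W (Icc 0 T) y :=
  ⟨hy.1, fun t ht => hVW (hV t ht), fun t ht => by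
    rw [hy.2.2 t ht, integral_congr_of_mem_Icc (fun s hs => hb (hV s hs)) ht]⟩

lemma intervalIntegrable (hy : IsSolutionOn b g y₀ U (Icc 0 T) y) (hb : ContinuousOn b U)
    {s t : ℝ} (hs : s ∈ Icc 0 T) (ht : t ∈ Icc 0 T) :
    IntervalIntegrable (fun u => b (y u)) volume s t :=
  ((hb.comp hy.1 hy.2.1).mono (uIcc_subset_Icc hs ht)).intervalIntegrable

end IsSolutionOn

section Picard

variable {b g : ℝ → ℝ} {y₀ T : ℝ}

lemma lipschitzWith_comp_add_const {K : NNReal} (hb : LipschitzWith K b) (c : ℝ) :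
    LipschitzWith K fun z => b (z + c) :=
  LipschitzWith.of_dist_le_mul fun z z' => by
    simpa [dist_add_right] using hb.dist_le_mul (z + c) (z' + c)

lemma continuousOn_uncurry_comp_add {S : Set ℝ} (hb : Continuous b) (hg : ContinuousOn g S) :
    ContinuousOn (Function.uncurry fun t z => b (z + g t)) (S ×ˢ univ) :=
  hb.comp_continuousOn <| continuousOn_snd.add <| hg.comp continuousOn_fst fun _ hp => hp.1

lemma IsSolutionOn.hasDerivWithinAt_sub {U : Set ℝ} {y : ℝ → ℝ} (hb : Continuous b)
    (hy : IsSolutionOn b g y₀ U (Icc 0 T) y) {t : ℝ} (ht : t ∈ Icc 0 T) :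
    HasDerivWithinAt (fun t => y t - g t) (b (y t)) (Icc 0 T) t :=
  (ODE.hasDerivWithinAt_picard_Icc (f := fun _ z => b z) (u := univ)
    (left_mem_Icc.2 (ht.1.trans ht.2)) (hb.comp continuous_snd).continuousOn hy.1
    (fun _ _ => mem_univ _) y₀ ht).congr_of_mem
    (fun s hs => by simp [hy.2.2 s hs]) ht

lemma IsSolutionOn.eqOn {K : NNReal} {U U' : Set ℝ} {y y' : ℝ → ℝ} (hb : LipschitzWith K b)
    (hg : ContinuousOn g (Icc 0 T)) (hy : IsSolutionOn b g y₀ U (Icc 0 T) y)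
    (hy' : IsSolutionOn b g y₀ U' (Icc 0 T) y') : EqOn y y' (Icc 0 T) := by
  intro t ht
  have h0 : (0:ℝ) ∈ Icc 0 T := left_mem_Icc.2 (ht.1.trans ht.2)
  -- `y - g` solves the ODE `z' = b (z + g t)`, whose right-hand side is `K`-Lipschitz in `z`
  have hderiv : ∀ {y : ℝ → ℝ} {U : Set ℝ}, IsSolutionOn b g y₀ U (Icc 0 T) y → ∀ t ∈ Ico 0 T,
      HasDerivWithinAt (fun t => y t - g t) (b (y t - g t + g t)) (Ici t) t := fun hy t ht => by
    simpa using (hy.hasDerivWithinAt_sub hb.continuous (Ico_subset_Icc_self ht))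
      |>.mono_of_mem_nhdsWithin (Icc_mem_nhdsGE_of_mem ht)
  have := ODE_solution_unique_of_mem_Icc_right
    (fun t _ => (lipschitzWith_comp_add_const hb (g t)).lipschitzOnWith (s := univ))
    (hy.1.sub hg) (hderiv hy) (fun _ _ => mem_univ _) (hy'.1.sub hg) (hderiv hy')
    (fun _ _ => mem_univ _) (by simp [hy.apply_zero h0, hy'.apply_zero h0])
  simpa using this ht

lemma exists_isSolutionOn_of_lipschitzWith {K : NNReal} {L : ℝ} (hb : LipschitzWith K b)
    (hbL : ∀ z, ‖b z‖ ≤ L) (hg : ContinuousOn g (Icc 0 T)) (hT : 0 ≤ T) (y₀ : ℝ) :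
    ∃ y, IsSolutionOn b g y₀ univ (Icc 0 T) y := by
  set v : ℝ → ℝ → ℝ := fun t z => b (z + g t)
  have hv : IsPicardLindelof v (⟨0, left_mem_Icc.2 hT⟩ : Icc 0 T) y₀
      (L.toNNReal * T.toNNReal) 0 L.toNNReal K :=
    { lipschitzOnWith := fun t _ => (lipschitzWith_comp_add_const hb (g t)).lipschitzOnWith
      continuousOn := fun _ _ => hb.continuous.comp_continuousOn (continuousOn_const.add hg)
      norm_le := fun _ _ _ _ => (hbL _).trans (Real.le_coe_toNNReal L)
      mul_max_le := by simp [hT] }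
  obtain ⟨z, hz0, hz⟩ := hv.exists_eq_forall_mem_Icc_hasDerivWithinAt₀
  refine ⟨fun t => z t + g t, ContinuousOn.add (fun t ht => (hz t ht).continuousWithinAt) hg,
    fun _ _ => mem_univ _, fun t ht => ?_⟩
  have hsub : uIcc 0 t ⊆ Icc 0 T := uIcc_subset_Icc (left_mem_Icc.2 hT) ht
  have hpicard := ODE.picard_eq_of_hasDerivAt (f := v) (u := univ)
    ((continuousOn_uncurry_comp_add hb.continuous hg).mono (prod_mono hsub subset_rfl))
    (fun s hs => (hz s (hsub hs)).mono hsub) (mapsTo_univ _ _)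
  simp only [ODE.picard_apply, hz0] at hpicard
  show z t + g t = _
  rw [← hpicard]

end Picard

section Barrier

lemma exists_downcrossing {y : ℝ → ℝ} {T lo hi : ℝ} (hy : ContinuousOn y (Icc 0 T))
    (hlohi : lo < hi) (hy0 : hi ≤ y 0) {t₀ : ℝ} (ht₀ : t₀ ∈ Icc 0 T) (hyt₀ : y t₀ ≤ lo) :
    ∃ s t, 0 ≤ s ∧ s < t ∧ t ≤ T ∧ hi ≤ y s ∧ y t ≤ lo ∧ ∀ u ∈ Ioo s t, y u ∈ Ioo lo hi := by
  -- `t` is the first time `y` reaches `lo`, and `s` the last time before `t` that `y ≥ hi`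
  set S := Icc 0 T ∩ y ⁻¹' Iic lo
  have hSb : BddBelow S := ⟨0, fun u hu => hu.1.1⟩
  obtain ⟨htS, hyt⟩ : sInf S ∈ S :=
    (hy.preimage_isClosed_of_isClosed isClosed_Icc isClosed_Iic).csInf_mem ⟨t₀, ht₀, hyt₀⟩ hSb
  set t := sInf S
  set S' := Icc 0 t ∩ y ⁻¹' Ici hi
  have hS'b : BddAbove S' := ⟨t, fun u hu => hu.1.2⟩
  obtain ⟨hsS', hys⟩ : sSup S' ∈ S' :=
    ((hy.mono (Icc_subset_Icc_right htS.2)).preimage_isClosed_of_isClosed isClosed_Icc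
      isClosed_Ici).csSup_mem ⟨0, ⟨le_rfl, htS.1⟩, hy0⟩ hS'b
  set s := sSup S'
  have hst : s < t := hsS'.2.lt_of_ne fun h => by
    rw [h] at hys; exact (hlohi.trans_le hys).not_ge hyt
  refine ⟨s, t, hsS'.1, hst, htS.2, hys, hyt, fun u hu => ⟨?_, ?_⟩⟩
  · by_contra! h
    exact (csInf_le hSb ⟨⟨hsS'.1.trans hu.1.le, hu.2.le.trans htS.2⟩, h⟩).not_gt hu.2
  · by_contra! h
    exact (le_csSup hS'b ⟨⟨hsS'.1.trans hu.1.le, hu.2.le⟩, h⟩).not_gt hu.1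

variable {b g y : ℝ → ℝ} {y₀ T K α A δ : ℝ} {U : Set ℝ}

lemma lower_barrier (hy : IsSolutionOn b g y₀ U (Icc 0 T) y) (hb : ContinuousOn b U)
    (hg : ∀ s ∈ Icc 0 T, ∀ t ∈ Icc 0 T, |g t - g s| ≤ K * |t - s| ^ α)
    (hδ : 0 < δ) (hy0 : 2 * δ ≤ y 0) (hA : ∀ z ∈ Icc δ (2 * δ), A ≤ b z)
    (hcrit : ∀ τ > 0, K * τ ^ α < δ + A * τ) {t : ℝ} (ht : t ∈ Icc 0 T) : δ < y t := by
  by_contra! hyt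
  obtain ⟨s, t, hs, hst, htT, hys, hyt, hmid⟩ :=
    exists_downcrossing hy.1 (by linarith : δ < 2 * δ) hy0 ht hyt
  have hsT : s ∈ Icc 0 T := ⟨hs, hst.le.trans htT⟩
  have htT' : t ∈ Icc 0 T := ⟨hs.trans hst.le, htT⟩
  have h0 : (0:ℝ) ∈ Icc 0 T := ⟨le_rfl, hs.trans (hst.le.trans htT)⟩
  have hincr : y t - y s = (∫ u in s..t, b (y u)) + (g t - g s) := by
    rw [hy.2.2 t htT', hy.2.2 s hsT, ← integral_interval_sub_left
      (hy.intervalIntegrable hb h0 htT') (hy.intervalIntegrable hb h0 hsT)]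
    ring
  have hdrift : A * (t - s) ≤ ∫ u in s..t, b (y u) := by
    simpa [mul_comm] using integral_mono_on_of_le_Ioo hst.le intervalIntegrable_const
      (hy.intervalIntegrable hb hsT htT') fun u hu => hA _ (Ioo_subset_Icc_self (hmid u hu))
  have hnoise : -(K * (t - s) ^ α) ≤ g t - g s := by
    have := hg s hsT t htT'
    rw [abs_of_pos (sub_pos.2 hst)] at this
    exact neg_le_of_abs_le this
  linarith [hcrit (t - s) (sub_pos.2 hst)]

lemma upper_barrier {M : ℝ} (hy : IsSolutionOn b g y₀ U (Icc 0 T) y) (hb : ContinuousOn b U)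
    (hg : ∀ s ∈ Icc 0 T, ∀ t ∈ Icc 0 T, |g t - g s| ≤ K * |t - s| ^ α)
    (hδ : 0 < δ) (hy0 : y 0 ≤ M - 2 * δ) (hA : ∀ z ∈ Icc (M - 2 * δ) (M - δ), b z ≤ -A)
    (hcrit : ∀ τ > 0, K * τ ^ α < δ + A * τ) {t : ℝ} (ht : t ∈ Icc 0 T) : y t < M - δ := by
  have hrefl : IsSolutionOn (fun z => -b (M - z)) (fun t => -g t) (M - y₀) ((M - ·) ⁻¹' U)
      (Icc 0 T) (fun t => M - y t) :=
    ⟨continuousOn_const.sub hy.1, fun t ht => by simpa using hy.2.1 t ht, fun t ht => by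
      simp only [sub_sub_cancel, intervalIntegral.integral_neg]
      rw [hy.2.2 t ht]
      ring⟩
  have := lower_barrier hrefl (hb.comp (continuousOn_const.sub continuousOn_id) fun _ h => h).neg
    (fun s hs t ht => by rw [neg_sub_neg, abs_sub_comm]; exact hg s hs t ht) hδ (by linarith)
    (fun z hz => by linarith [hA (M - z) ⟨by linarith [hz.2], by linarith [hz.1]⟩]) hcrit ht
  linarith

end Barrier

lemma rpow_lt_one_add {x α : ℝ} (hx : 0 < x) (hα : α ∈ Icc (0:ℝ) 1) : x ^ α < 1 + x := by
  rcases le_total x 1 with h | h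
  · linarith [Real.rpow_le_one hx.le h hα.1]
  · calc x ^ α ≤ x ^ (1:ℝ) := Real.rpow_le_rpow_of_exponent_le h hα.2
      _ < 1 + x := by rw [Real.rpow_one]; linarith

lemma mul_rpow_lt_add_mul {K δ α τ : ℝ} (hK : 0 < K) (hδ : 0 < δ) (hα : α ∈ Ioc (0:ℝ) 1)
    (hτ : 0 < τ) : K * τ ^ α < δ + K ^ α⁻¹ * δ ^ (1 - α⁻¹) * τ := by
  -- rescale time by `τ₀`, at which `K τ₀ ^ α = δ`
  set τ₀ := (δ / K) ^ α⁻¹ with hτ₀_def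
  have hτ₀ : 0 < τ₀ := by positivity
  have hKτ₀ : K * τ₀ ^ α = δ := by
    rw [Real.rpow_inv_rpow (by positivity) hα.1.ne']
    field_simp
  have hslope : K ^ α⁻¹ * δ ^ (1 - α⁻¹) = δ / τ₀ := by
    rw [hτ₀_def, Real.div_rpow hδ.le hK.le, Real.rpow_sub hδ, Real.rpow_one]
    field_simp
  have hx := rpow_lt_one_add (div_pos hτ hτ₀) ⟨hα.1.le, hα.2⟩
  rw [Real.div_rpow hτ.le hτ₀.le] at hx
  calc K * τ ^ α = δ * (τ ^ α / τ₀ ^ α) := by rw [← hKτ₀]; field_simp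
    _ < δ * (1 + τ / τ₀) := mul_lt_mul_of_pos_left hx hδ
    _ = δ + K ^ α⁻¹ * δ ^ (1 - α⁻¹) * τ := by rw [hslope]; field_simp

lemma eventually_mul_rpow_le_mul_rpow {a b C D : ℝ} (hab : a < b) (hD : 0 < D) :
    ∀ᶠ x in 𝓝[>] (0:ℝ), C * x ^ b ≤ D * x ^ a := by
  have hlim : Tendsto (fun x : ℝ => C * x ^ (b - a)) (𝓝[>] 0) (𝓝 0) := by
    have := ((Real.continuousAt_rpow_const 0 (b - a) (Or.inr (by linarith))).const_mul C).tendsto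
    simpa [Real.zero_rpow (by linarith : b - a ≠ 0)] using this.mono_left nhdsWithin_le_nhds
  filter_upwards [hlim.eventually (eventually_le_nhds hD), self_mem_nhdsWithin] with x hx hx0
  calc C * x ^ b = C * x ^ (b - a) * x ^ a := by
        rw [mul_assoc, ← Real.rpow_add hx0, sub_add_cancel]
    _ ≤ D * x ^ a := mul_le_mul_of_nonneg_right hx (Real.rpow_nonneg (le_of_lt hx0) a)

lemma exists_barrier_level {b : ℝ → ℝ} {M y₀ K α ρ : ℝ}
    (hrep : RepelsFromBoundary b M ρ)
    (hα : α ∈ Ioc (0:ℝ) 1) (hρ : α⁻¹ - 1 < ρ) (hK : 0 < K) (hy₀ : y₀ ∈ Ioo 0 M) :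
    ∃ δ A, 0 < δ ∧ 2 * δ ≤ y₀ ∧ y₀ ≤ M - 2 * δ ∧ (∀ z ∈ Icc δ (2 * δ), A ≤ b z) ∧
      (∀ z ∈ Icc (M - 2 * δ) (M - δ), b z ≤ -A) ∧ ∀ τ > 0, K * τ ^ α < δ + A * τ := by
  obtain ⟨c, hc, ε, hε, hcε⟩ := hrep
  have hρ0 : 0 ≤ ρ := by linarith [(one_le_inv₀ hα.1).2 hα.2]
  have hm : 0 < min ε (min y₀ (M - y₀)) := lt_min hε (lt_min hy₀.1 (by linarith [hy₀.2]))
  obtain ⟨δ, hδA, hδ⟩ := ((eventually_mul_rpow_le_mul_rpow (C := K ^ α⁻¹) (D := c * 2 ^ (-ρ))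
    (a := -ρ) (b := 1 - α⁻¹) (by linarith) (by positivity)).and
    (Ioo_mem_nhdsGT (half_pos hm))).exists
  have h2δ : 2 * δ < min ε (min y₀ (M - y₀)) := by linarith [hδ.2]
  have hA : ∀ z ∈ Icc δ (2 * δ), K ^ α⁻¹ * δ ^ (1 - α⁻¹) ≤ c * z ^ (-ρ) := fun z hz =>
    calc K ^ α⁻¹ * δ ^ (1 - α⁻¹) ≤ c * 2 ^ (-ρ) * δ ^ (-ρ) := hδA
      _ = c * (2 * δ) ^ (-ρ) := by rw [Real.mul_rpow (by norm_num) hδ.1.le]; ring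
      _ ≤ c * z ^ (-ρ) := mul_le_mul_of_nonneg_left
        (Real.rpow_le_rpow_of_nonpos (hδ.1.trans_le hz.1) hz.2 (by linarith)) hc.le
  have hzε : ∀ z ∈ Icc δ (2 * δ), z ∈ Ioc 0 ε := fun z hz =>
    ⟨hδ.1.trans_le hz.1, hz.2.trans (h2δ.le.trans (min_le_left _ _))⟩
  refine ⟨δ, _, hδ.1, ?_, ?_, fun z hz => (hA z hz).trans (hcε z (hzε z hz)).1, fun z hz => ?_,
    fun τ hτ => mul_rpow_lt_add_mul hK hδ.1 hα hτ⟩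
  · linarith [min_le_left y₀ (M - y₀), min_le_right ε (min y₀ (M - y₀))]
  · linarith [min_le_right y₀ (M - y₀), min_le_right ε (min y₀ (M - y₀))]
  · have hz' : M - z ∈ Icc δ (2 * δ) := ⟨by linarith [hz.2], by linarith [hz.1]⟩
    have := (hcε _ (hzε _ hz')).2
    rw [sub_sub_cancel] at this
    linarith [hA _ hz']

lemma continuousOn_of_abs_sub_le_mul_rpow {g : ℝ → ℝ} {S : Set ℝ} {K α : ℝ} (hα : 0 < α)
    (hg : ∀ s ∈ S, ∀ t ∈ S, |g t - g s| ≤ K * |t - s| ^ α) : ContinuousOn g S := by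
  intro s hs
  have hlim : Tendsto (fun t => K * |t - s| ^ α) (𝓝[S] s) (𝓝 0) := by
    have := (((continuous_abs.comp (continuous_sub_right s)).rpow_const
      fun _ => Or.inr hα.le).const_mul K).tendsto s
    simpa [Real.zero_rpow hα.ne'] using this.mono_left nhdsWithin_le_nhds
  refine tendsto_iff_dist_tendsto_zero.2 (squeeze_zero' (Eventually.of_forall fun _ => dist_nonneg)
    ?_ hlim)
  filter_upwards [self_mem_nhdsWithin] with t ht
  rw [Real.dist_eq]
  exact hg s hs t ht

theorem exists_unique_isSolutionOn_Icc {b g : ℝ → ℝ} {M y₀ T K α ρ : ℝ}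
    (hb : LocallyLipschitzOn (Ioo 0 M) b)
    (hrep : RepelsFromBoundary b M ρ)
    (hα : α ∈ Ioc (0:ℝ) 1) (hρ : α⁻¹ - 1 < ρ) (hK : 0 < K)
    (hg : ∀ s ∈ Icc 0 T, ∀ t ∈ Icc 0 T, |g t - g s| ≤ K * |t - s| ^ α) (hg0 : g 0 = 0)
    (hy₀ : y₀ ∈ Ioo 0 M) (hT : 0 ≤ T) :
    ∃ y, IsSolutionOn b g y₀ (Ioo 0 M) (Icc 0 T) y ∧
      ∀ y', IsSolutionOn b g y₀ (Ioo 0 M) (Icc 0 T) y' → EqOn y' y (Icc 0 T) := by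
  obtain ⟨δ, A, hδ, hy₀δ, hy₀M, hlow, hup, hcrit⟩ := exists_barrier_level hrep hα hρ hK hy₀
  have hδM : δ ≤ M - δ := by linarith
  have hgc : ContinuousOn g (Icc 0 T) := continuousOn_of_abs_sub_le_mul_rpow hα.1 hg
  have inside : ∀ {b' y : ℝ → ℝ} {U : Set ℝ}, IsSolutionOn b' g y₀ U (Icc 0 T) y →
      ContinuousOn b' U → EqOn b' b (Icc δ (M - δ)) → ∀ t ∈ Icc 0 T, y t ∈ Ioo δ (M - δ) := by
    intro b' y U hy hb' hbb' t ht
    have hy0 : y 0 = y₀ := by simpa [hg0] using hy.apply_zero (left_mem_Icc.2 hT)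
    exact ⟨lower_barrier hy hb' hg hδ (hy0 ▸ hy₀δ)
        (fun z hz => hbb' ⟨hz.1, by linarith [hz.2]⟩ ▸ hlow z hz) hcrit ht,
      upper_barrier hy hb' hg hδ (hy0 ▸ hy₀M)
        (fun z hz => hbb' ⟨by linarith [hz.1], hz.2⟩ ▸ hup z hz) hcrit ht⟩
  obtain ⟨L, hL⟩ := (hb.mono (Icc_subset_Ioo hδ (by linarith : M - δ < M)))
    |>.exists_lipschitzOnWith_of_compact isCompact_Icc
  obtain ⟨C, hC⟩ := isCompact_Icc.exists_bound_of_continuousOn hL.continuousOn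
  set f := IccExtend hδM ((Icc δ (M - δ)).domRestrict b)
  have hf : LipschitzWith L f := by
    have := hL.to_restrict.comp (LipschitzWith.projIcc hδM)
    rwa [mul_one] at this
  have hfb : EqOn f b (Icc δ (M - δ)) := fun z hz => IccExtend_of_mem hδM _ hz
  obtain ⟨y, hy⟩ := exists_isSolutionOn_of_lipschitzWith hf
    (fun z => hC _ (projIcc δ (M - δ) hδM z).2) hgc hT y₀
  refine ⟨y, hy.congr_drift (inside hy hf.continuous.continuousOn hfb)
    (hfb.mono Ioo_subset_Icc_self) (Ioo_subset_Ioo hδ.le (by linarith)), fun y' hy' => ?_⟩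
  exact (hy'.congr_drift (inside hy' hb.continuousOn fun _ _ => rfl)
    (hfb.mono Ioo_subset_Icc_self).symm (subset_univ _)).eqOn hf hgc hy

theorem exists_unique_isSolutionOn_Ici {b g : ℝ → ℝ} {y₀ : ℝ} {U : Set ℝ}
    (h : ∀ T > 0, ∃ y, IsSolutionOn b g y₀ U (Icc 0 T) y ∧
      ∀ y', IsSolutionOn b g y₀ U (Icc 0 T) y' → EqOn y' y (Icc 0 T)) :
    ∃ y, IsSolutionOn b g y₀ U (Ici 0) y ∧
      ∀ y', IsSolutionOn b g y₀ U (Ici 0) y' → EqOn y' y (Ici 0) := by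
  choose! Y hY huniq using h
  have hagree : ∀ T > 0, ∀ T' > 0, EqOn (Y T) (Y T') (Icc 0 (min T T')) := fun T hT T' hT' t ht =>
    (huniq _ (lt_min hT hT') _ ((hY T hT).mono (Icc_subset_Icc_right (min_le_left _ _))) ht).trans
      (huniq _ (lt_min hT hT') _ ((hY T' hT').mono (Icc_subset_Icc_right (min_le_right _ _)))
        ht).symm
  set y := fun t => Y (t + 1) t
  have hYy : ∀ T > 0, EqOn (Y T) y (Icc 0 T) := fun T hT t ht =>
    hagree T hT (t + 1) (by linarith [ht.1]) ⟨ht.1, le_min ht.2 (by linarith)⟩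
  have hsol : ∀ t ≥ 0, IsSolutionOn b g y₀ U (Icc 0 (t + 1)) y := fun t ht =>
    (hY (t + 1) (by linarith)).congr (hYy (t + 1) (by linarith))
  have hmem : ∀ t ≥ (0:ℝ), t ∈ Icc 0 (t + 1) := fun t ht => ⟨ht, by linarith⟩
  refine ⟨y, ⟨fun t ht => ?_, fun t ht => (hsol t ht).2.1 t (hmem t ht),
    fun t ht => (hsol t ht).2.2 t (hmem t ht)⟩, fun y' hy' t ht => ?_⟩
  · refine ((hsol t ht).1 t (hmem t ht)).mono_of_mem_nhdsWithin ?_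
    rw [← Ici_inter_Iic]
    exact inter_mem_nhdsWithin _ (Iic_mem_nhds (by linarith))
  · exact (huniq _ (by linarith [mem_Ici.1 ht]) y' (hy'.mono Icc_subset_Ici_self)
      (hmem t ht)).trans (hYy _ (by linarith [mem_Ici.1 ht]) (hmem t ht))

theorem stmt9 (α β θ μ γ : ℝ) (hα : α ∈ Set.Ioc (0:ℝ) 1)
    (hβ : β ∈ Set.Ioo (1 - α) 1) (hθ : 0 < θ) (hμ : μ ∈ Set.Ioo (0:ℝ) 1)
    (w : ℝ → ℝ) (hw0 : w 0 = 0)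
    (hw : ∀ T > (0:ℝ), ∃ C : ℝ, ∀ s ∈ Set.Icc (0:ℝ) T, ∀ t ∈ Set.Icc (0:ℝ) T,
      |w t - w s| ≤ C * |t - s| ^ α)
    (y₀ : ℝ) (hy₀ : y₀ ∈ Set.Ioo 0 (F1 β 1)) :
    ∃ y : ℝ → ℝ,
      (ContinuousOn y (Set.Ici 0) ∧
       (∀ t ∈ Set.Ici (0:ℝ), y t ∈ Set.Ioo 0 (F1 β 1)) ∧
       (∀ t ∈ Set.Ici (0:ℝ),
         y t = y₀ + (∫ s in (0:ℝ)..t, G β θ μ (F1inv β (y s))) + γ * θ ^ β * w t)) ∧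
      ∀ y' : ℝ → ℝ,
        (ContinuousOn y' (Set.Ici 0) ∧
         (∀ t ∈ Set.Ici (0:ℝ), y' t ∈ Set.Ioo 0 (F1 β 1)) ∧
         (∀ t ∈ Set.Ici (0:ℝ),
           y' t = y₀ + (∫ s in (0:ℝ)..t, G β θ μ (F1inv β (y' s))) + γ * θ ^ β * w t)) →
        ∀ t ∈ Set.Ici (0:ℝ), y' t = y t := by
  have hβ' : β ∈ Ico 0 1 := ⟨by linarith [hβ.1, hα.2], hβ.2⟩
  have hρ : α⁻¹ - 1 < β / (1 - β) := by
    rw [inv_eq_one_div, div_sub_one hα.1.ne', div_lt_div_iff₀ hα.1 (by linarith [hβ.2])]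
    nlinarith [hβ.1]
  refine exists_unique_isSolutionOn_Ici (b := drift β θ μ) (g := fun t => γ * θ ^ β * w t)
    fun T hT => ?_
  obtain ⟨C, hC⟩ := hw T hT
  have hg : ∀ s ∈ Icc 0 T, ∀ t ∈ Icc 0 T,
      |γ * θ ^ β * w t - γ * θ ^ β * w s| ≤ max (|γ * θ ^ β| * C) 1 * |t - s| ^ α :=
    fun s hs t ht => calc
      |γ * θ ^ β * w t - γ * θ ^ β * w s| = |γ * θ ^ β| * |w t - w s| := by
        rw [← mul_sub, abs_mul]
      _ ≤ |γ * θ ^ β| * C * |t - s| ^ α := by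
        rw [mul_assoc]; exact mul_le_mul_of_nonneg_left (hC s hs t ht) (abs_nonneg _)
      _ ≤ max (|γ * θ ^ β| * C) 1 * |t - s| ^ α :=
        mul_le_mul_of_nonneg_right (le_max_left _ _) (by positivity)
  exact exists_unique_isSolutionOn_Icc (locallyLipschitzOn_drift hβ')
    (repelsFromBoundary_drift hβ' hθ hμ) hα hρ (lt_max_of_lt_right one_pos) hg (by simp [hw0]) hy₀
    hT.le
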